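/- arXiv:1902.10405 — 5 statements merged into one kernel-verified Lean document; each statement's English description precedes it below -/
import Mathlib

section
/- For z ∈ ℝ with -A_max ≤ z ≤ 0, the minimum over a ∈ Π_k [0, ρ^k A_max] of 2 z (a·1_d) + c_α(a) equals -ρ̄ z², where ρ̄ = Σ_{k=1}^d ρ^k; equivalently H_d(z) := -inf_{a ∈ A} {2 z a·1_d + c_α(a)} = ρ̄ z² on that range. -/
/-- For `-Amax ≤ z ≤ 0`, the minimum over the box `A` of `2 z (a·1_d) + c_α(a)`
equals `-ρ̄ z²` with `ρ̄ = Σ_k ρ k`. -/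
theorem stmt1 (d : ℕ) (hd : 1 ≤ d) (ρ : Fin d → ℝ) (hρ : ∀ k, 0 < ρ k)
    (Amax : ℝ) (hAmax : 0 < Amax) (z : ℝ) (hz1 : -Amax ≤ z) (hz2 : z ≤ 0) :
    let cα : (Fin d → ℝ) → ℝ := fun a => ∑ k, (a k) ^ 2 / ρ k
    let A : Set (Fin d → ℝ) := {a | ∀ k, a k ∈ Set.Icc 0 (ρ k * Amax)}
    let f : (Fin d → ℝ) → ℝ := fun a => 2 * z * (∑ k, a k) + cα a
    IsLeast {y | ∃ a ∈ A, y = f a} (-(∑ k, ρ k) * z ^ 2) := by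
  intro cα A f
  constructor
  · refine ⟨fun k => -z * ρ k, fun k => ⟨?_, ?_⟩, ?_⟩
    · exact mul_nonneg (neg_nonneg.2 hz2) (hρ k).le
    · have := hρ k; show -z * ρ k ≤ ρ k * Amax; nlinarith
    simp only [f, cα]
    rw [Finset.mul_sum, ← Finset.sum_add_distrib, neg_mul, Finset.sum_mul,
      ← Finset.sum_neg_distrib]
    apply Finset.sum_congr rfl
    intro k _
    have hk := (hρ k).ne'
    field_simp
    ring
  · rintro y ⟨a, ha, rfl⟩
    simp only [f, cα]
    rw [Finset.mul_sum, ← Finset.sum_add_distrib, neg_mul, Finset.sum_mul,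
      ← Finset.sum_neg_distrib]
    apply Finset.sum_le_sum
    intro k _
    have hk := hρ k
    have h := sq_nonneg (a k + ρ k * z)
    have hd2 : a k ^ 2 / ρ k = a k ^ 2 * (ρ k)⁻¹ := div_eq_mul_inv _ _
    rw [hd2, ← sub_nonneg]
    have hinv : 0 < (ρ k)⁻¹ := inv_pos.2 hk
    have key : 2 * z * a k + a k ^ 2 * (ρ k)⁻¹ - -(ρ k * z ^ 2) = (a k + ρ k * z) ^ 2 * (ρ k)⁻¹ := by
      field_simp
      ring
    rw [key]
    positivity
end

section
/- In dimension d = 1, for q ≥ 0 and assuming (λ q)^{-1/(η+1)} ≥ B_min whenever λ q > 1, the function F_0(q) := inf_{γ < 0} {Σ*(γ) q + c_β*(γ)} satisfies F_0(q) = σ² q if λ q ≤ 1, and F_0(q) = (σ²/(λ η)) ((1+η)(λ q)^{η/(1+η)} - 1) if λ q > 1, where Σ*(γ) = Σ(b*(γ)) and c_β*(γ) = c_β(b*(γ)) with b*(γ) = min(1, max((λ γ⁻)^{-1/(η+1)}, B_min)). -/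
/-!
After factoring out `σ²/(λη)`, the objective at `b = b*(γ)` is `η t b + b^(-η) - 1` with `t = λq`.
Weighted AM–GM bounds `η t b + b^(-η)` below by `(1+η) t^(η/(1+η))`, with equality at
`b = t^(-1/(1+η))`, the value of `b*(-q)` when `λq > 1`. When `λq ≤ 1` that point lies beyond `1`,
and the bound at `t = 1` together with `(1-t)(1-b) ≥ 0` shows that `b = 1 = b*(-1/λ)` is optimal.
-/

open Real

/-- Weighted AM–GM for `t b` and `b^(-η)` with weights `η/(1+η)` and `1/(1+η)`: the geometric
mean is `t^(η/(1+η))`, independent of `b`. -/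
theorem one_add_mul_rpow_div_le (η t b : ℝ) (hη : 0 ≤ η) (ht : 0 ≤ t) (hb : 0 < b) :
    (1 + η) * t ^ (η / (1 + η)) ≤ η * t * b + b ^ (-η) := by
  have hgm : (t * b) ^ (η / (1 + η)) * (b ^ (-η)) ^ (1 / (1 + η)) = t ^ (η / (1 + η)) := by
    rw [mul_rpow ht hb.le, ← rpow_mul hb.le, mul_assoc, ← rpow_add hb]
    rw [show η / (1 + η) + -η * (1 / (1 + η)) = 0 by ring, rpow_zero, mul_one]
  have hamgm := Real.geom_mean_le_arith_mean2_weighted (w₁ := η / (1 + η)) (w₂ := 1 / (1 + η))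
    (by positivity) (by positivity) (mul_nonneg ht hb.le) (rpow_nonneg hb.le (-η))
    (by field_simp; ring)
  rw [hgm] at hamgm
  calc (1 + η) * t ^ (η / (1 + η))
      ≤ (1 + η) * (η / (1 + η) * (t * b) + 1 / (1 + η) * b ^ (-η)) := by gcongr
    _ = η * t * b + b ^ (-η) := by field_simp

theorem mul_rpow_add_rpow_at_minimizer (η t : ℝ) (hη : η + 1 ≠ 0) (ht : 0 < t) :
    η * t * t ^ (-(1 / (η + 1))) + (t ^ (-(1 / (η + 1)))) ^ (-η) =
      (1 + η) * t ^ (η / (1 + η)) := by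
  have hη' : 1 + η ≠ 0 := by rwa [add_comm]
  have hlin : t * t ^ (-(1 / (η + 1))) = t ^ (η / (1 + η)) := by
    rw [show η / (1 + η) = 1 + -(1 / (η + 1)) by field_simp; ring, rpow_add ht, rpow_one]
  have hpow : (t ^ (-(1 / (η + 1)))) ^ (-η) = t ^ (η / (1 + η)) := by
    rw [← rpow_mul ht.le]; congr 1; field_simp; ring
  rw [mul_assoc, hlin, hpow]; ring

theorem mul_add_one_le_mul_add_rpow_neg (η t b : ℝ) (hη : 0 ≤ η) (ht : t ≤ 1) (hb : 0 < b)
    (hb1 : b ≤ 1) : η * t + 1 ≤ η * t * b + b ^ (-η) := by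
  have h := one_add_mul_rpow_div_le η 1 b hη zero_le_one hb
  rw [one_rpow] at h
  nlinarith [mul_nonneg hη (mul_nonneg (sub_nonneg.2 ht) (sub_nonneg.2 hb1))]

theorem stmt3_general (σ lmb et Bmin : ℝ) (hl : 0 < lmb) (he : 1 < et)
    (hB : Bmin ∈ Set.Ioo (0 : ℝ) 1) (q : ℝ)
    (hcase : 1 < lmb * q → Bmin ≤ (lmb * q) ^ (-(1 / (et + 1)))) :
    let bstar : ℝ → ℝ :=
      fun γ => min 1 (max ((lmb * max (-γ) 0) ^ (-(1 / (et + 1)))) Bmin)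
    let Sigs : ℝ → ℝ := fun γ => σ ^ 2 * bstar γ
    let cβs : ℝ → ℝ := fun γ => σ ^ 2 / (lmb * et) * ((bstar γ) ^ (-et) - 1)
    sInf {x | ∃ γ < (0 : ℝ), x = Sigs γ * q + cβs γ} =
      if lmb * q ≤ 1 then σ ^ 2 * q
      else σ ^ 2 / (lmb * et) * ((1 + et) * (lmb * q) ^ (et / (1 + et)) - 1) := by
  intro bstar Sigs cβs
  have het : 0 < et := by linarith
  have hbstar_pos (γ : ℝ) : 0 < bstar γ := hB.1.trans_le (le_min hB.2.le (le_max_right _ _))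
  have hbstar_le_one (γ : ℝ) : bstar γ ≤ 1 := min_le_left _ _
  have hobj (γ : ℝ) : Sigs γ * q + cβs γ =
      σ ^ 2 / (lmb * et) * (et * (lmb * q) * bstar γ + bstar γ ^ (-et) - 1) := by
    simp only [Sigs, cβs]; field_simp; ring
  apply IsLeast.csInf_eq
  split_ifs with hlq
  · have hb : bstar (-lmb⁻¹) = 1 := by
      simp only [bstar, neg_neg, max_eq_left (inv_nonneg.2 hl.le), mul_inv_cancel₀ hl.ne',
        one_rpow, max_eq_left hB.2.le, min_self]
    refine ⟨⟨-lmb⁻¹, by simpa using hl, ?_⟩, ?_⟩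
    · rw [hobj, hb, one_rpow]; field_simp; ring
    · rintro _ ⟨γ, -, rfl⟩
      rw [hobj]
      calc σ ^ 2 * q = σ ^ 2 / (lmb * et) * (et * (lmb * q) + 1 - 1) := by field_simp; ring
        _ ≤ _ := by
          gcongr σ ^ 2 / (lmb * et) * (?_ - 1)
          exact mul_add_one_le_mul_add_rpow_neg et _ _ het.le hlq (hbstar_pos γ) (hbstar_le_one γ)
  · replace hlq := not_le.1 hlq
    have hq : 0 < q := pos_of_mul_pos_right (one_pos.trans hlq) hl.le
    have hb : bstar (-q) = (lmb * q) ^ (-(1 / (et + 1))) := by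
      simp only [bstar, neg_neg, max_eq_left hq.le, max_eq_left (hcase hlq)]
      exact min_eq_right (rpow_le_one_of_one_le_of_nonpos hlq.le (by simp; positivity))
    refine ⟨⟨-q, by linarith, ?_⟩, ?_⟩
    · rw [hobj, hb, mul_rpow_add_rpow_at_minimizer et _ (by positivity) (one_pos.trans hlq)]
    · rintro _ ⟨γ, -, rfl⟩
      rw [hobj]
      gcongr σ ^ 2 / (lmb * et) * (?_ - 1)
      exact one_add_mul_rpow_div_le et _ _ het.le (by positivity) (hbstar_pos γ)

/-- In dimension one, the function `F₀(q) = inf_{γ<0} {Σ*(γ) q + c_β*(γ)}` equals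
`σ² q` if `λ q ≤ 1` and `(σ²/(λη))((1+η)(λq)^{η/(1+η)} - 1)` if `λ q > 1`,
provided `(λq)^{-1/(η+1)} ≥ Bmin` whenever `λ q > 1`. -/
theorem stmt3 (σ lmb et Bmin : ℝ) (hσ : 0 < σ) (hl : 0 < lmb) (he : 1 < et)
    (hB : Bmin ∈ Set.Ioo (0 : ℝ) 1) (q : ℝ) (hq : 0 ≤ q)
    (hcase : 1 < lmb * q → Bmin ≤ (lmb * q) ^ (-(1 / (et + 1)))) :
    let bstar : ℝ → ℝ :=
      fun γ => min 1 (max ((lmb * max (-γ) 0) ^ (-(1 / (et + 1)))) Bmin)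
    let Sigs : ℝ → ℝ := fun γ => σ ^ 2 * bstar γ
    let cβs : ℝ → ℝ := fun γ => σ ^ 2 / (lmb * et) * ((bstar γ) ^ (-et) - 1)
    sInf {x | ∃ γ < (0 : ℝ), x = Sigs γ * q + cβs γ} =
      if lmb * q ≤ 1 then σ ^ 2 * q
      else σ ^ 2 / (lmb * et) * ((1 + et) * (lmb * q) ^ (et / (1 + et)) - 1) :=
  stmt3_general σ lmb et Bmin hl he hB q hcase
end

section
/- For all t ∈ [0,T], m^{0,P}(t) ≥ m^P(t), where m^P(t) = (θ/2)(σ°)² + (1/2)((σ°)² R̄ - ρ̄) δ²(T-t)² + (1/2) inf_z h̄(t,z), m^{0,P}(t) = (θ/2)(σ°)² - (1/2) ρ̄ δ²(T-t)² + (1/2) inf_z h̄^P(t,z), h̄(t,z) = F_0(θ + R_A z²) + ρ̄ (min(z⁻, A_max) + δ(T-t))², and h̄^P(t,z) = h̄(t,z) + (σ°)²(R_A z² + R_P(-z + δ(T-t))²). -/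
/-- Comparison of the running costs for the risk-averse Principal:
`m^{0,P}(t) ≥ m^P(t)` for all `t ∈ [0,T]` (new contracts dominate classical ones). -/
theorem stmt12 (T θ σ0 RA RP ρb Amax δ Rb : ℝ)
    (hT : 0 < T) (hθ : 0 < θ) (hσ : 0 ≤ σ0) (hA : 0 < RA) (hP : 0 < RP)
    (hρ : 0 < ρb) (hAm : 0 < Amax) (hR : Rb = RA * RP / (RA + RP))
    (F0 : ℝ → ℝ) :
    let hbar : ℝ → ℝ → ℝ := fun t z =>
      F0 (θ + RA * z ^ 2) + ρb * (min (max (-z) 0) Amax + δ * (T - t)) ^ 2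
    let hbarP : ℝ → ℝ → ℝ := fun t z =>
      hbar t z + σ0 ^ 2 * (RA * z ^ 2 + RP * (-z + δ * (T - t)) ^ 2)
    let mP : ℝ → ℝ := fun t =>
      θ / 2 * σ0 ^ 2 + 1 / 2 * (σ0 ^ 2 * Rb - ρb) * δ ^ 2 * (T - t) ^ 2
        + 1 / 2 * sInf (Set.range (hbar t))
    let m0P : ℝ → ℝ := fun t =>
      θ / 2 * σ0 ^ 2 - 1 / 2 * ρb * δ ^ 2 * (T - t) ^ 2
        + 1 / 2 * sInf (Set.range (hbarP t))
    ∀ t ∈ Set.Icc (0 : ℝ) T, BddBelow (Set.range (hbar t)) →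
      BddBelow (Set.range (hbarP t)) → mP t ≤ m0P t := by
  intro hbar hbarP mP m0P t ht hb1 hb2
  have hsum : 0 < RA + RP := by linarith
  have key : ∀ z : ℝ, hbar t z + σ0 ^ 2 * Rb * (δ * (T - t)) ^ 2 ≤ hbarP t z := by
    intro z
    have h2 : Rb * (δ * (T - t)) ^ 2 ≤ RA * z ^ 2 + RP * (-z + δ * (T - t)) ^ 2 := by
      rw [hR, div_mul_eq_mul_div, div_le_iff₀ hsum]
      nlinarith [sq_nonneg (RA * z + RP * (z - δ * (T - t)))]
    have h3 := mul_le_mul_of_nonneg_left h2 (sq_nonneg σ0)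
    simp only [hbarP]
    nlinarith
  have hinf : sInf (Set.range (hbar t)) + σ0 ^ 2 * Rb * (δ * (T - t)) ^ 2
      ≤ sInf (Set.range (hbarP t)) := by
    apply le_csInf (Set.range_nonempty _)
    rintro y ⟨z, rfl⟩
    have h1 := csInf_le hb1 ⟨z, rfl⟩
    linarith [key z]
  simp only [mP, m0P]
  nlinarith [hinf]
end

section
/- Let R_A, R_P > 0, R_0 < 0, V < 0, and define G(ρ) = ρ(-R_0 + ((R_A+R_P)/R_P) (R_P/(ρ R_A))^{R_A/(R_A+R_P)} V) for ρ > 0. Then G attains its infimum over (0,∞) at ρ* = (R_P/R_A)(V/R_0)^{1 + R_P/R_A}, and the infimum value equals R_0 (V/R_0)^{1 + R_P/R_A}. -/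
/-! With `a = R_A/(R_A+R_P)`, `G ρ = -R₀ ρ - B ρ^(1-a)` for a constant `B > 0`: a positive linear
term minus a concave power. Choosing `ρ*` with `B = -R₀ ρ*^a / (1-a)`, the inequality `G ρ* ≤ G ρ` is
the weighted AM–GM inequality `ρ^(1-a) ρ*^a ≤ (1-a) ρ + a ρ*`, and `G ρ* = R₀ ρ* a/(1-a)`. -/

open Real Set

lemma rpow_mul_rpow_one_sub {x : ℝ} (hx : 0 ≤ x) (a : ℝ) : x ^ a * x ^ (1 - a) = x := by
  rw [← rpow_add' hx (by norm_num), add_sub_cancel, rpow_one]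

lemma mul_div_rpow_eq {c ρ : ℝ} (hc : 0 ≤ c) (hρ : 0 < ρ) (a : ℝ) :
    ρ * (c / ρ) ^ a = c ^ a * ρ ^ (1 - a) := by
  rw [div_rpow hc hρ.le, rpow_sub hρ, rpow_one]
  field_simp

lemma isMinOn_mul_sub_mul_rpow {A a ρs : ℝ} (hA : 0 ≤ A) (ha0 : 0 ≤ a) (ha1 : a < 1)
    (hρs : 0 ≤ ρs) :
    IsMinOn (fun ρ => A * ρ - A / (1 - a) * ρs ^ a * ρ ^ (1 - a)) (Ici 0) ρs := by
  intro ρ (hρ : 0 ≤ ρ)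
  have h1a : 0 < 1 - a := by linarith
  have amgm : ρ ^ (1 - a) * ρs ^ a ≤ (1 - a) * ρ + a * ρs :=
    geom_mean_le_arith_mean2_weighted h1a.le ha0 hρ hρs (by ring)
  have hK : 0 ≤ A / (1 - a) := div_nonneg hA h1a.le
  calc A * ρs - A / (1 - a) * ρs ^ a * ρs ^ (1 - a)
      = A * ρ - A / (1 - a) * ((1 - a) * ρ + a * ρs) := by
        rw [mul_assoc, rpow_mul_rpow_one_sub hρs]; field_simp; ring
    _ ≤ A * ρ - A / (1 - a) * (ρ ^ (1 - a) * ρs ^ a) := by gcongr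
    _ = A * ρ - A / (1 - a) * ρs ^ a * ρ ^ (1 - a) := by ring

/-- The Lagrange-multiplier minimization of the first-best problem:
`G(ρ) = ρ(-R₀ + ((R_A+R_P)/R_P)(R_P/(ρ R_A))^{R_A/(R_A+R_P)} V)` attains its
infimum over `(0,∞)` at `ρ* = (R_P/R_A)(V/R₀)^{1+R_P/R_A}`, with value
`R₀ (V/R₀)^{1+R_P/R_A}`. -/
theorem stmt15 (RA RP R0 V : ℝ) (hA : 0 < RA) (hP : 0 < RP)
    (h0 : R0 < 0) (hV : V < 0) :
    let G : ℝ → ℝ := fun ρ =>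
      ρ * (-R0 + (RA + RP) / RP * (RP / (ρ * RA)) ^ (RA / (RA + RP)) * V)
    let ρs : ℝ := RP / RA * (V / R0) ^ (1 + RP / RA)
    0 < ρs ∧ (∀ ρ : ℝ, 0 < ρ → G ρs ≤ G ρ) ∧
      G ρs = R0 * (V / R0) ^ (1 + RP / RA) := by
  intro G ρs
  set a := RA / (RA + RP) with ha
  have ht : 0 < V / R0 := div_pos_of_neg_of_neg hV h0
  have hρs : 0 < ρs := by positivity
  have h1a : 1 - a = RP / (RA + RP) := by rw [ha]; field_simp; ring
  have hρsa : ρs ^ a = (RP / RA) ^ a * (V / R0) := by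
    rw [mul_rpow (by positivity) (by positivity), ← rpow_mul ht.le,
      show (1 + RP / RA) * a = 1 by rw [ha]; field_simp, rpow_one]
  have hG : ∀ ρ > 0, G ρ = -R0 * ρ - -R0 / (1 - a) * ρs ^ a * ρ ^ (1 - a) := by
    intro ρ hρ
    have hpow := mul_div_rpow_eq (c := RP / RA) (by positivity) hρ a
    rw [div_div, mul_comm RA] at hpow
    simp only [G]
    rw [mul_add, mul_comm (_ / _), mul_assoc, mul_assoc, ← mul_assoc ρ, hpow, hρsa]
    generalize ρ ^ (1 - a) = p
    rw [h1a]
    field_simp [h0.ne]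
    ring
  refine ⟨hρs, fun ρ hρ => ?_, ?_⟩
  · rw [hG ρs hρs, hG ρ hρ]
    exact isMinOn_mul_sub_mul_rpow (by linarith) (by positivity) (sub_pos.1 (h1a ▸ by positivity))
      hρs.le (mem_Ici.2 hρ.le)
  · rw [hG ρs hρs, mul_assoc, rpow_mul_rpow_one_sub hρs.le, h1a]
    simp only [ρs]
    field_simp
    ring
end

section
/- Let κ ≥ 0, T > 0, and suppose ψ(t,x) = A(t) x + ψ₀(t) solves ∂_t ψ(t,x) + κ x - H₀(∂²_{xx}ψ - R_A(∂_x ψ)²)(t,x) = 0 for all (t,x) ∈ [0,T) × ℝ with ψ(T,·) = 0, where H₀(γ) = (1/2)(c_β*(γ) - γ Σ*(γ) - γ (σ°)²). Then necessarily A(t) = κ(T - t) and ψ₀(t) = -∫_t^T H₀(-R_A κ² (T-s)²) ds; moreover γ⁰(t) := ∂²_{xx}ψ - R_A(∂_x ψ)² = -R_A κ²(T-t)². -/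
/-!
Comparing the coefficients of `x` in the PDE gives the terminal-value problems `A' = -κ`,
`A(T) = 0` and `ψ₀' = H₀(-R_A A²)`, `ψ₀(T) = 0`; both are solved by the fundamental theorem
of calculus on `[t, T]`, the first one before the second since its solution enters the
integrand of the second.
-/

open Set MeasureTheory

lemma eq_zero_and_eq_zero_of_forall_mul_add_eq_zero {a b : ℝ} (h : ∀ x : ℝ, a * x + b = 0) :
    a = 0 ∧ b = 0 := by
  have hb : b = 0 := by simpa using h 0
  refine ⟨?_, hb⟩
  simpa [hb] using h 1

lemma eq_neg_intervalIntegral_of_hasDerivAt_of_right_eq_zero {f f' : ℝ → ℝ} {t T : ℝ}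
    (htT : t ≤ T) (hcont : ContinuousOn f (Icc t T))
    (hderiv : ∀ s ∈ Ioo t T, HasDerivAt f (f' s) s) (hint : IntervalIntegrable f' volume t T)
    (hfT : f T = 0) : f t = -∫ s in t..T, f' s := by
  rw [intervalIntegral.integral_eq_sub_of_hasDerivAt_of_le htT hcont hderiv hint, hfT]
  ring

theorem stmt17_general (κ T RA : ℝ) (H0 : ℝ → ℝ)
    (hH0cont : Continuous H0)
    (A ψ0 A' ψ0' : ℝ → ℝ)
    (hAc : ContinuousOn A (Set.Icc 0 T)) (hψc : ContinuousOn ψ0 (Set.Icc 0 T))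
    (hAd : ∀ t ∈ Set.Ico (0 : ℝ) T, HasDerivAt A (A' t) t)
    (hψd : ∀ t ∈ Set.Ico (0 : ℝ) T, HasDerivAt ψ0 (ψ0' t) t)
    (hpde : ∀ t ∈ Set.Ico (0 : ℝ) T, ∀ x : ℝ,
      A' t * x + ψ0' t + κ * x - H0 (-RA * (A t) ^ 2) = 0)
    (hAT : A T = 0) (hψT : ψ0 T = 0) :
    ∀ t ∈ Set.Icc (0 : ℝ) T,
      A t = κ * (T - t) ∧
      ψ0 t = -∫ s in t..T, H0 (-RA * κ ^ 2 * (T - s) ^ 2) ∧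
      -RA * (A t) ^ 2 = -RA * κ ^ 2 * (T - t) ^ 2 := by
  have hcoeffs : ∀ s ∈ Ico 0 T, A' s = -κ ∧ ψ0' s = H0 (-RA * A s ^ 2) := fun s hs => by
    have := eq_zero_and_eq_zero_of_forall_mul_add_eq_zero
      (a := A' s + κ) (b := ψ0' s - H0 (-RA * A s ^ 2)) fun x => by
        linear_combination hpde s hs x
    exact ⟨eq_neg_of_add_eq_zero_left this.1, sub_eq_zero.mp this.2⟩
  have hsub : ∀ t ∈ Icc 0 T, Ioo t T ⊆ Ico 0 T := fun t ht s hs =>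
    ⟨ht.1.trans hs.1.le, hs.2⟩
  have hA : ∀ t ∈ Icc 0 T, A t = κ * (T - t) := fun t ht => by
    have := eq_neg_intervalIntegral_of_hasDerivAt_of_right_eq_zero (f' := fun _ => -κ) ht.2
      (hAc.mono (Icc_subset_Icc_left ht.1))
      (fun s hs => (hcoeffs s (hsub t ht hs)).1 ▸ hAd s (hsub t ht hs))
      intervalIntegrable_const hAT
    simpa [mul_comm] using this
  intro t ht
  refine ⟨hA t ht, ?_, by rw [hA t ht]; ring⟩
  refine eq_neg_intervalIntegral_of_hasDerivAt_of_right_eq_zero ht.2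
    (hψc.mono (Icc_subset_Icc_left ht.1)) (fun s hs => ?_)
    ((hH0cont.comp (by fun_prop)).intervalIntegrable t T) hψT
  have hs' := hsub t ht hs
  convert hψd s hs' using 1
  rw [(hcoeffs s hs').2, hA s (Ico_subset_Icc_self hs')]
  ring_nf

/-- If `ψ(t,x) = A(t)x + ψ₀(t)` solves `∂_t ψ + κ x - H₀(∂²_{xx}ψ - R_A(∂_x ψ)²) = 0`
on `[0,T) × ℝ` with `ψ(T,·) = 0`, where `H₀(γ) = (1/2)(c_β*(γ) - γΣ*(γ) - γ(σ°)²)`,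
then `A(t) = κ(T-t)`, `ψ₀(t) = -∫_t^T H₀(-R_A κ²(T-s)²) ds`, and
`γ⁰(t) = -R_A κ²(T-t)²`. -/
theorem stmt17 (κ T RA σ0 : ℝ) (hκ : 0 ≤ κ) (hT : 0 < T) (hRA : 0 < RA)
    (hσ : 0 ≤ σ0) (Sigs cβs H0 : ℝ → ℝ)
    (hH0def : ∀ γ : ℝ, H0 γ = 1 / 2 * (cβs γ - γ * Sigs γ - γ * σ0 ^ 2))
    (hH0cont : Continuous H0)
    (A ψ0 A' ψ0' : ℝ → ℝ)
    (hAc : ContinuousOn A (Set.Icc 0 T)) (hψc : ContinuousOn ψ0 (Set.Icc 0 T))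
    (hAd : ∀ t ∈ Set.Ico (0 : ℝ) T, HasDerivAt A (A' t) t)
    (hψd : ∀ t ∈ Set.Ico (0 : ℝ) T, HasDerivAt ψ0 (ψ0' t) t)
    (hpde : ∀ t ∈ Set.Ico (0 : ℝ) T, ∀ x : ℝ,
      A' t * x + ψ0' t + κ * x - H0 (-RA * (A t) ^ 2) = 0)
    (hAT : A T = 0) (hψT : ψ0 T = 0) :
    ∀ t ∈ Set.Icc (0 : ℝ) T,
      A t = κ * (T - t) ∧
      ψ0 t = -∫ s in t..T, H0 (-RA * κ ^ 2 * (T - s) ^ 2) ∧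
      -RA * (A t) ^ 2 = -RA * κ ^ 2 * (T - t) ^ 2 :=
  stmt17_general κ T RA H0 hH0cont A ψ0 A' ψ0' hAc hψc hAd hψd hpde hAT hψT
end
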